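/- Suppose η_n → 0, √n·η_n → ∞, and θ_n/η_n → ζ with 1 < |ζ|. Then the distribution of √n(θ̂_H − θ_n) under P_{n,θ_n} converges in total variation to the standard normal distribution. -/

import Mathlib

open MeasureTheory ProbabilityTheory Real Filter Topology Set

noncomputable def stdGauss : Measure ℝ := gaussianReal 0 1

/-- Standard normal cdf. -/
noncomputable def Phi (x : ℝ) : ℝ := (stdGauss (Set.Iic x)).toReal

/-- Standard normal density. -/
noncomputable def phi (x : ℝ) : ℝ := gaussianPDFReal 0 1 x

/-- Hard-thresholding estimator. -/
noncomputable def hardThresh (η y : ℝ) : ℝ := if η < |y| then y else 0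

/-- Soft-thresholding (LASSO) estimator. -/
noncomputable def softThresh (η y : ℝ) : ℝ := Real.sign y * max (|y| - η) 0

/-- SCAD estimator. -/
noncomputable def scadThresh (a η y : ℝ) : ℝ :=
  if |y| ≤ 2 * η then Real.sign y * max (|y| - η) 0
  else if |y| ≤ a * η then ((a - 1) * y - Real.sign y * a * η) / (a - 2)
  else y

/-!
Once `|θₙ| > ηₙ` by a margin, thresholding leaves `ȳ = θₙ + z/√n` untouched unless the noise is
large: `√n (θ̂_H - θₙ) = z` whenever `|z| < tₙ := √n (|θₙ| - ηₙ) = √n ηₙ (|θₙ/ηₙ| - 1)`, and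
`tₙ → ∞` because `√n ηₙ → ∞` and `|θₙ/ηₙ| - 1 → |ζ| - 1 > 0`. A map that is the identity off a
set `T` moves every event by at most `μ T`, so the total variation distance is at most the
Gaussian tail `P(|Z| > tₙ - 1) → 0`.
-/

instance : IsProbabilityMeasure stdGauss := by unfold stdGauss; infer_instance

@[fun_prop]
lemma measurable_hardThresh (η : ℝ) : Measurable (hardThresh η) :=
  Measurable.ite (measurableSet_lt measurable_const measurable_abs) measurable_id measurable_const

lemma hardThresh_add_of_abs_lt {η θ u : ℝ} (h : |u| < |θ| - η) :
    hardThresh η (θ + u) = θ + u := by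
  refine if_pos ?_
  have := abs_sub_abs_le_abs_sub θ (-u)
  rw [abs_neg, sub_neg_eq_add] at this
  linarith

lemma mul_hardThresh_add_div_sub_self {η θ s z : ℝ} (hs : 0 < s) (h : |z| < s * (|θ| - η)) :
    s * (hardThresh η (θ + z / s) - θ) = z := by
  rw [hardThresh_add_of_abs_lt]
  · field_simp
    ring
  · rwa [abs_div, abs_of_pos hs, div_lt_iff₀' hs]

lemma tendsto_measure_abs_gt_atTop (μ : Measure ℝ) [IsFiniteMeasure μ] :
    Tendsto (fun r : ℝ => μ {x | r < |x|}) atTop (𝓝 0) := by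
  simpa using tendsto_measure_norm_gt_of_isTightMeasureSet (isTightMeasureSet_singleton (μ := μ))

lemma iSup_abs_measureReal_map_sub_le {α : Type*} [MeasurableSpace α] {μ : Measure α}
    [IsFiniteMeasure μ] {f : α → α} (hf : Measurable f) {T : Set α} (hT : ∀ x ∉ T, f x = x) :
    ⨆ (s : Set α) (_ : MeasurableSet s), |(μ.map f).real s - μ.real s| ≤ μ.real T := by
  have le_add : ∀ A B : Set α, A ⊆ B ∪ T → μ.real A ≤ μ.real B + μ.real T := fun A B h =>
    (measureReal_mono h).trans (measureReal_union_le _ _)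
  have covers : ∀ s : Set α, s ⊆ f ⁻¹' s ∪ T ∧ f ⁻¹' s ⊆ s ∪ T := fun s =>
    have same : ∀ x ∉ T, x ∈ f ⁻¹' s ↔ x ∈ s := fun x hx => by rw [mem_preimage, hT x hx]
    ⟨fun x hx => (em' (x ∈ T)).imp (fun h => (same x h).2 hx) id,
      fun x hx => (em' (x ∈ T)).imp (fun h => (same x h).1 hx) id⟩
  refine Real.iSup_le (fun s => Real.iSup_le (fun hs => ?_) measureReal_nonneg) measureReal_nonneg
  rw [map_measureReal_apply hf hs, abs_sub_le_iff]
  exact ⟨by linarith [le_add _ _ (covers s).2], by linarith [le_add _ _ (covers s).1]⟩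

theorem stmt_16_general (η θ : ℕ → ℝ) (ζ : ℝ) (hζ : 1 < |ζ|)
    (hηe : Tendsto (fun n : ℕ => Real.sqrt n * η n) atTop atTop)
    (hθζ : Tendsto (fun n => θ n / η n) atTop (𝓝 ζ)) :
    Tendsto (fun n : ℕ => ⨆ (s : Set ℝ) (_ : MeasurableSet s),
        |((Measure.map (fun z => Real.sqrt n * (hardThresh (η n) (θ n + z / Real.sqrt n) - θ n))
            stdGauss) s).toReal - (stdGauss s).toReal|)
      atTop (𝓝 0) := by
  set t : ℕ → ℝ := fun n => Real.sqrt n * η n * (|θ n / η n| - 1)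
  have ht : Tendsto (fun n => t n - 1) atTop atTop :=
    tendsto_atTop_add_const_right _ _ <|
      hηe.atTop_mul_pos (sub_pos.2 hζ) (hθζ.abs.sub_const 1)
  have hfix : ∀ᶠ n in atTop, ∀ z ∉ {x : ℝ | t n - 1 < |x|},
      Real.sqrt n * (hardThresh (η n) (θ n + z / Real.sqrt n) - θ n) = z := by
    filter_upwards [hηe.eventually_gt_atTop 0] with n hpos z hz
    have hη : 0 < η n := pos_of_mul_pos_right hpos (Real.sqrt_nonneg _)
    have hsqrt : 0 < Real.sqrt n := pos_of_mul_pos_left hpos hη.le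
    refine mul_hardThresh_add_div_sub_self hsqrt ?_
    calc |z| ≤ t n - 1 := not_lt.1 hz
      _ < t n := sub_one_lt _
      _ = Real.sqrt n * (|θ n| - η n) := by
        simp only [t, abs_div, abs_of_pos hη]
        field_simp
  refine squeeze_zero' (Eventually.of_forall fun n => ?_) (hfix.mono fun n hn =>
    iSup_abs_measureReal_map_sub_le (by fun_prop) hn)
    ((ENNReal.tendsto_toReal (by simp)).comp ((tendsto_measure_abs_gt_atTop stdGauss).comp ht))
  exact Real.iSup_nonneg fun s => Real.iSup_nonneg fun _ => abs_nonneg _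

theorem stmt_16 (η θ : ℕ → ℝ) (hηpos : ∀ n, 0 < η n) (ζ : ℝ) (hζ : 1 < |ζ|)
    (hη0 : Tendsto η atTop (𝓝 0))
    (hηe : Tendsto (fun n : ℕ => Real.sqrt n * η n) atTop atTop)
    (hθζ : Tendsto (fun n => θ n / η n) atTop (𝓝 ζ)) :
    Tendsto (fun n : ℕ => ⨆ (s : Set ℝ) (_ : MeasurableSet s),
        |((Measure.map (fun z => Real.sqrt n * (hardThresh (η n) (θ n + z / Real.sqrt n) - θ n))
            stdGauss) s).toReal - (stdGauss s).toReal|)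
      atTop (𝓝 0) :=
  stmt_16_general η θ ζ hζ hηe hθζ
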